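/- Let Γ be a subgroup of Homeo₊(S¹) and assume that there exists a Γ-invariant Borel probability measure on the circle. Then Γ has a finite image under the rotation number function if and only if Γ has a finite orbit. -/

import Mathlib

open Filter Topology Set MeasureTheory Classical

noncomputable section

/-- The circle `S¹ = ℝ/ℤ`. -/
abbrev S1 := AddCircle (1 : ℝ)

/-- The group of homeomorphisms of the circle (composition as multiplication). -/
instance : Group (S1 ≃ₜ S1) where
  mul f g := g.trans f
  one := Homeomorph.refl _
  inv := Homeomorph.symm
  mul_assoc f g h := rfl
  one_mul f := Homeomorph.ext fun _ => rfl
  mul_one f := Homeomorph.ext fun _ => rfl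
  inv_mul_cancel f := Homeomorph.ext fun x => f.symm_apply_apply x

/-- `F` is a lift of the circle map `f` to the real line. -/
def IsLiftOf (F : CircleDeg1Lift) (f : S1 ≃ₜ S1) : Prop :=
  ∀ x : ℝ, f (x : S1) = ((F x : ℝ) : S1)

/-- `f` is an orientation-preserving homeomorphism of the circle: it admits a lift to
a monotone homeomorphism of `ℝ` commuting with integer translations. -/
def OrientationPreserving (f : S1 ≃ₜ S1) : Prop :=
  ∃ F : CircleDeg1Liftˣ, IsLiftOf (F : CircleDeg1Lift) f

/-- The rotation number `ρ(f) ∈ ℝ/ℤ` of an orientation-preserving circle homeomorphism: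
the translation number of a lift, taken modulo `ℤ` (independent of the lift). -/
def rotationNumber (f : S1 ≃ₜ S1) : AddCircle (1 : ℝ) :=
  if h : ∃ F : CircleDeg1Liftˣ, IsLiftOf (F : CircleDeg1Lift) f then
    (((h.choose : CircleDeg1Lift).translationNumber : ℝ) : AddCircle (1 : ℝ))
  else 0

/-- The orbit of `x` under a subgroup `Γ` of circle homeomorphisms. -/
def circleOrbit (Γ : Subgroup (S1 ≃ₜ S1)) (x : S1) : Set S1 :=
  {y : S1 | ∃ γ ∈ Γ, γ x = y}

/-- `Γ` has a finite orbit. -/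
def HasFiniteOrbit (Γ : Subgroup (S1 ≃ₜ S1)) : Prop :=
  ∃ x : S1, (circleOrbit Γ x).Finite

/-- `f` is an orientation-preserving real analytic diffeomorphism of the circle: it has a
lift which is a real analytic map `ℝ → ℝ` with everywhere positive derivative. -/
def IsAnalyticDiffeo (f : S1 ≃ₜ S1) : Prop :=
  ∃ F : CircleDeg1Liftˣ, IsLiftOf (F : CircleDeg1Lift) f ∧
    AnalyticOnNhd ℝ (⇑(F : CircleDeg1Lift)) Set.univ ∧
    ∀ x : ℝ, 0 < deriv (⇑(F : CircleDeg1Lift)) x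

/-- `Γ` is nondiscrete with respect to the `C¹`-topology: there is a sequence of elements of
`Γ ∖ {id}` converging to the identity in the `C¹`-topology (expressed via lifts). -/
def C1Nondiscrete (Γ : Subgroup (S1 ≃ₜ S1)) : Prop :=
  ∃ (f : ℕ → S1 ≃ₜ S1) (F : ℕ → CircleDeg1Liftˣ),
    (∀ n, f n ∈ Γ ∧ f n ≠ 1 ∧ IsLiftOf (F n : CircleDeg1Lift) (f n)) ∧
    ∀ ε : ℝ, 0 < ε → ∃ N : ℕ, ∀ n ≥ N, ∀ x : ℝ,
      |(F n : CircleDeg1Lift) x - x| < ε ∧ |deriv (⇑(F n : CircleDeg1Lift)) x - 1| < ε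

/-- `Γ` is locally nondiscrete with respect to the `C¹`-topology: some sequence of elements of
`Γ ∖ {id}` converges to the identity in the `C¹`-topology on some open interval of the circle
(an interval is described by a lift chart `]a, b[` with `b ≤ a + 1`). -/
def LocallyC1Nondiscrete (Γ : Subgroup (S1 ≃ₜ S1)) : Prop :=
  ∃ a b : ℝ, a < b ∧ b ≤ a + 1 ∧
    ∃ (f : ℕ → S1 ≃ₜ S1) (F : ℕ → CircleDeg1Liftˣ),
      (∀ n, f n ∈ Γ ∧ f n ≠ 1 ∧ IsLiftOf (F n : CircleDeg1Lift) (f n)) ∧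
      ∀ ε : ℝ, 0 < ε → ∃ N : ℕ, ∀ n ≥ N, ∀ x ∈ Ioo a b,
        |(F n : CircleDeg1Lift) x - x| < ε ∧ |deriv (⇑(F n : CircleDeg1Lift)) x - 1| < ε

/-- `Γ` is locally nondiscrete with respect to the `C⁰`-topology. -/
def LocallyC0Nondiscrete (Γ : Subgroup (S1 ≃ₜ S1)) : Prop :=
  ∃ a b : ℝ, a < b ∧ b ≤ a + 1 ∧
    ∃ (f : ℕ → S1 ≃ₜ S1) (F : ℕ → CircleDeg1Liftˣ),
      (∀ n, f n ∈ Γ ∧ f n ≠ 1 ∧ IsLiftOf (F n : CircleDeg1Lift) (f n)) ∧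
      ∀ ε : ℝ, 0 < ε → ∃ N : ℕ, ∀ n ≥ N, ∀ x ∈ Ioo a b,
        |(F n : CircleDeg1Lift) x - x| < ε

/-- There is a `Γ`-invariant Borel probability measure on the circle. -/
def HasInvariantProbMeasure (Γ : Subgroup (S1 ≃ₜ S1)) : Prop :=
  ∃ μ : Measure S1, IsProbabilityMeasure μ ∧ ∀ γ ∈ Γ, Measure.map (⇑γ) μ = μ

/-- `Γ` is minimal: every orbit is dense in the circle. -/
def IsMinimalSubgroup (Γ : Subgroup (S1 ≃ₜ S1)) : Prop :=
  ∀ x : S1, Dense (circleOrbit Γ x)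

/-- The closed arc `π([a, b])` of the circle. -/
def closedArc (a b : ℝ) : Set S1 :=
  (fun x : ℝ => (x : S1)) '' Icc a b

/-- The closed arc `π([a,b])` is `Γ`-contractible: some sequence `gₙ ∈ Γ` shrinks its
length to zero (lengths are measured via orientation-preserving lifts). -/
def ContractibleArc (Γ : Subgroup (S1 ≃ₜ S1)) (a b : ℝ) : Prop :=
  ∃ (g : ℕ → S1 ≃ₜ S1) (G : ℕ → CircleDeg1Liftˣ),
    (∀ n, g n ∈ Γ ∧ IsLiftOf (G n : CircleDeg1Lift) (g n)) ∧
    Tendsto (fun n => (G n : CircleDeg1Lift) b - (G n : CircleDeg1Lift) a) atTop (𝓝 0)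

/-- `Φ` is a local flow of the vector field `X` on the set `K` for times `0 ≤ t ≤ t₀`,
staying inside the domain `dom` of `X`. -/
def IsLocalFlowOn (X : ℝ → ℝ) (dom : Set ℝ) (Φ : ℝ → ℝ → ℝ) (K : Set ℝ) (t₀ : ℝ) : Prop :=
  (∀ x ∈ K, Φ 0 x = x) ∧
  ∀ x ∈ K, ∀ t ∈ Icc (0 : ℝ) t₀, Φ t x ∈ dom ∧
    HasDerivWithinAt (fun s => Φ s x) (X (Φ t x)) (Icc (0 : ℝ) t₀) t

/-- The local vector field `X` on the open interval `]a,b[` (in a lift chart of the circle)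
is in the `C⁰`-closure of `Γ` relative to this interval: every time-`t₀` map of its local flow
defined on a compact subinterval is a uniform limit of (lifts of) elements of `Γ`. -/
def InC0Closure (Γ : Subgroup (S1 ≃ₜ S1)) (a b : ℝ) (X : ℝ → ℝ) : Prop :=
  ∀ c d : ℝ, a < c → c ≤ d → d < b →
    ∀ t₀ : ℝ, 0 < t₀ → ∀ Φ : ℝ → ℝ → ℝ,
      IsLocalFlowOn X (Ioo a b) Φ (Icc c d) t₀ →
      ∃ (γ : ℕ → S1 ≃ₜ S1) (G : ℕ → CircleDeg1Liftˣ),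
        (∀ n, γ n ∈ Γ ∧ IsLiftOf (G n : CircleDeg1Lift) (γ n)) ∧
        TendstoUniformlyOn (fun n x => (G n : CircleDeg1Lift) x) (fun x => Φ t₀ x)
          atTop (Icc c d)

/-!
Let `μ` be a `Γ`-invariant probability measure. For a lift `F` of `f ∈ Γ`, the displacement
`x ↦ F x - x` descends to the circle, is an additive cocycle and stays within `1` of the translation
number, so averaging over the iterates `Fⁿ` shows that `τ F = ∫ (F x - x) dμ`. Hence the rotation
number is a homomorphism on `Γ`.

An element of rotation number zero fixes each of its recurrent points: between two consecutive fixed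
points of a lift the orbit moves monotonically. By Poincaré recurrence it therefore fixes `μ`-almost
every point, hence, its fixed point set being closed, every point `x₀` of the support of `μ`.

Consequently, for `γ, δ ∈ Γ`, `ρ γ = ρ δ` iff `δ⁻¹ γ` has rotation number zero, which implies
`γ x₀ = δ x₀`, and is implied by `γ x = δ x` for any `x`. So the orbit map at `x₀` factors through
`ρ`, and `ρ` factors through the orbit map at any `x`.
-/

open CircleDeg1Lift

theorem coe_eq_coe_iff_exists_int (x y : ℝ) : (x : S1) = y ↔ ∃ m : ℤ, y = x + m := by
  rw [eq_comm, ← sub_eq_zero, ← AddCircle.coe_sub, AddCircle.coe_eq_zero_iff]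
  refine exists_congr fun m => ?_
  rw [zsmul_one, eq_sub_iff_add_eq, eq_comm, add_comm]

theorem coe_add_intCast (x : ℝ) (m : ℤ) : ((x + m : ℝ) : S1) = x :=
  ((coe_eq_coe_iff_exists_int x _).2 ⟨m, rfl⟩).symm

theorem CircleDeg1Lift.continuous_units (F : CircleDeg1Liftˣ) : Continuous (F : CircleDeg1Lift) :=
  (toOrderIso F).continuous

theorem CircleDeg1Lift.translationNumber_eq_add_int {F G : CircleDeg1Lift} {m : ℤ}
    (h : ∀ x, G x = F x + m) : G.translationNumber = F.translationNumber + m := by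
  have hG : G = ↑(translate (Multiplicative.ofAdd (m : ℝ))) * F :=
    CircleDeg1Lift.ext fun x => by rw [mul_apply, translate_apply, h, add_comm]
  have hcomm : Commute (↑(translate (Multiplicative.ofAdd (m : ℝ)))) F :=
    commute_iff_commute.2 fun x => by simp only [translate_apply, map_int_add]
  rw [hG, translationNumber_mul_of_commute hcomm, translationNumber_translate, add_comm]

namespace IsLiftOf

variable {F G : CircleDeg1Lift} {f g : S1 ≃ₜ S1}

theorem mul (hF : IsLiftOf F f) (hG : IsLiftOf G g) : IsLiftOf (F * G) (f * g) := fun x => by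
  change f (g x) = _
  rw [hG, hF, mul_apply]

theorem iterate (hF : IsLiftOf F f) (n : ℕ) (x : ℝ) : f^[n] x = ((F^[n] x : ℝ) : S1) := by
  induction n generalizing x with
  | zero => rfl
  | succ n ih => rw [Function.iterate_succ_apply, Function.iterate_succ_apply, hF, ih]

theorem exists_int_eq_add (hF : IsLiftOf F f) (hG : IsLiftOf G f) (hFc : Continuous F)
    (hGc : Continuous G) : ∃ m : ℤ, ∀ x, G x = F x + m := by
  choose e he using fun x => (coe_eq_coe_iff_exists_int _ _).1 ((hF x).symm.trans (hG x))
  have he_cont : Continuous e := by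
    refine Int.isClosedEmbedding_coe_real.isEmbedding.continuous_iff.2 ?_
    have : ((↑) ∘ e : ℝ → ℝ) = fun x => G x - F x := funext fun x => by simp [he x]
    rw [this]
    exact hGc.sub hFc
  exact ⟨e 0, fun x => by rw [he x, PreconnectedSpace.constant inferInstance he_cont]⟩

end IsLiftOf

theorem rotationNumber_eq_of_isLiftOf {F : CircleDeg1Liftˣ} {f : S1 ≃ₜ S1}
    (hF : IsLiftOf F f) : rotationNumber f = ((F : CircleDeg1Lift).translationNumber : S1) := by
  have h : ∃ G : CircleDeg1Liftˣ, IsLiftOf G f := ⟨F, hF⟩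
  obtain ⟨m, hm⟩ := hF.exists_int_eq_add h.choose_spec (continuous_units F) (continuous_units _)
  rw [rotationNumber, dif_pos h, translationNumber_eq_add_int hm, coe_add_intCast]

def displacement (F : CircleDeg1Lift) : S1 → ℝ :=
  Function.Periodic.lift (f := fun x => F x - x) fun x => by
    simp only [map_add_one]
    ring

@[simp]
theorem displacement_coe (F : CircleDeg1Lift) (x : ℝ) : displacement F x = F x - x := rfl

@[simp]
theorem displacement_one : displacement 1 = 0 :=
  funext fun z => QuotientAddGroup.induction_on z fun x => by simp

theorem continuous_displacement {F : CircleDeg1Lift} (hF : Continuous F) :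
    Continuous (displacement F) :=
  (QuotientAddGroup.isQuotientMap_mk _).continuous_iff.2 (hF.sub continuous_id)

theorem abs_displacement_sub_translationNumber_le (F : CircleDeg1Lift) (z : S1) :
    |displacement F z - F.translationNumber| ≤ 1 := by
  induction z using QuotientAddGroup.induction_on with | H x => ?_
  have h₁ := F.floor_sub_le_translationNumber x
  have h₂ := F.translationNumber_le_ceil_sub x
  rw [displacement_coe, abs_le]
  constructor <;> linarith [Int.sub_one_lt_floor (F x - x), Int.ceil_lt_add_one (F x - x)]

theorem displacement_mul {F G : CircleDeg1Lift} {g : S1 ≃ₜ S1} (hG : IsLiftOf G g) (z : S1) :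
    displacement (F * G) z = displacement F (g z) + displacement G z := by
  induction z using QuotientAddGroup.induction_on with | H x => ?_
  rw [hG]
  simp only [displacement_coe, mul_apply]
  ring

section InvariantMeasure

variable {μ : Measure S1} [IsProbabilityMeasure μ] {f g : S1 ≃ₜ S1} {F G : CircleDeg1Lift}

theorem integrable_displacement (hF : Continuous F) : Integrable (displacement F) μ :=
  (continuous_displacement hF).integrable_of_hasCompactSupport (HasCompactSupport.of_compactSpace _)

theorem abs_integral_displacement_sub_translationNumber_le (hF : Continuous F) :
    |∫ z, displacement F z ∂μ - F.translationNumber| ≤ 1 :=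
  calc |∫ z, displacement F z ∂μ - F.translationNumber|
      = ‖∫ z, (displacement F z - F.translationNumber) ∂μ‖ := by
        rw [integral_sub (integrable_displacement hF) (integrable_const _), integral_const,
          Real.norm_eq_abs]
        simp
    _ ≤ 1 * μ.real univ := norm_integral_le_of_norm_le_const
        (.of_forall (abs_displacement_sub_translationNumber_le F))
    _ = 1 := by simp

theorem integral_displacement_pow (hf : MeasurePreserving f μ μ) (hF : IsLiftOf F f)
    (hFc : Continuous F) (n : ℕ) :
    ∫ z, displacement (F ^ n) z ∂μ = n * ∫ z, displacement F z ∂μ := by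
  induction n with
  | zero => simp
  | succ n ih =>
    simp_rw [pow_succ, displacement_mul hF]
    have hint : Integrable (fun z => displacement (F ^ n) (f z)) μ :=
      hf.integrable_comp_of_integrable (integrable_displacement (F.continuous_pow hFc n))
    rw [integral_add hint (integrable_displacement hFc),
      hf.integral_comp f.measurableEmbedding, ih]
    push_cast
    ring

theorem translationNumber_eq_integral_displacement (hf : MeasurePreserving f μ μ)
    (hF : IsLiftOf F f) (hFc : Continuous F) :
    F.translationNumber = ∫ z, displacement F z ∂μ := by
  have hbound (n : ℕ) : n * |∫ z, displacement F z ∂μ - F.translationNumber| ≤ 1 := by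
    have := abs_integral_displacement_sub_translationNumber_le (μ := μ) (F.continuous_pow hFc n)
    rwa [integral_displacement_pow hf hF hFc, translationNumber_pow, ← mul_sub, abs_mul,
      Nat.abs_cast] at this
  by_contra hne
  have hpos : 0 < |∫ z, displacement F z ∂μ - F.translationNumber| :=
    abs_pos.2 (sub_ne_zero.2 (Ne.symm hne))
  obtain ⟨n, hn⟩ := exists_nat_gt (1 / |∫ z, displacement F z ∂μ - F.translationNumber|)
  rw [div_lt_iff₀ hpos] at hn
  linarith [hbound n]

theorem translationNumber_mul_of_isLiftOf (hf : MeasurePreserving f μ μ)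
    (hg : MeasurePreserving g μ μ) (hF : IsLiftOf F f) (hG : IsLiftOf G g) (hFc : Continuous F)
    (hGc : Continuous G) :
    (F * G).translationNumber = F.translationNumber + G.translationNumber := by
  have hint : Integrable (fun z => displacement F (g z)) μ :=
    hg.integrable_comp_of_integrable (integrable_displacement hFc)
  have hfg : MeasurePreserving (f * g) μ μ := hf.comp hg
  rw [translationNumber_eq_integral_displacement hfg (hF.mul hG) (hFc.comp hGc),
    translationNumber_eq_integral_displacement hf hF hFc,
    translationNumber_eq_integral_displacement hg hG hGc]
  simp_rw [displacement_mul hG]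
  rw [integral_add hint (integrable_displacement hGc), hg.integral_comp g.measurableEmbedding]

theorem rotationNumber_mul_of_measurePreserving (hf : MeasurePreserving f μ μ)
    (hg : MeasurePreserving g μ μ) (hf' : OrientationPreserving f)
    (hg' : OrientationPreserving g) :
    rotationNumber (f * g) = rotationNumber f + rotationNumber g := by
  obtain ⟨F, hF⟩ := hf'
  obtain ⟨G, hG⟩ := hg'
  have hFG : IsLiftOf ((F * G : CircleDeg1Liftˣ) : CircleDeg1Lift) (f * g) := hF.mul hG
  rw [rotationNumber_eq_of_isLiftOf hF, rotationNumber_eq_of_isLiftOf hG,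
    rotationNumber_eq_of_isLiftOf hFG, Units.val_mul,
    translationNumber_mul_of_isLiftOf hf hg hF hG (continuous_units F) (continuous_units G),
    AddCircle.coe_add]

end InvariantMeasure

section FixedPoints

variable {f : S1 ≃ₜ S1}

theorem rotationNumber_eq_zero_of_apply_eq (hf : OrientationPreserving f) {x : S1}
    (hx : f x = x) : rotationNumber f = 0 := by
  obtain ⟨F, hF⟩ := hf
  induction x using QuotientAddGroup.induction_on with | H a => ?_
  obtain ⟨m, hm⟩ := (coe_eq_coe_iff_exists_int _ _).1 ((hF a).symm.trans hx).symm
  rw [rotationNumber_eq_of_isLiftOf hF, (F : CircleDeg1Lift).translationNumber_of_eq_add_int hm]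
  simp

theorem exists_isLiftOf_translationNumber_eq_zero (hf : OrientationPreserving f)
    (hρ : rotationNumber f = 0) :
    ∃ F : CircleDeg1Liftˣ, IsLiftOf F f ∧ (F : CircleDeg1Lift).translationNumber = 0 := by
  obtain ⟨F, hF⟩ := hf
  rw [rotationNumber_eq_of_isLiftOf hF, AddCircle.coe_eq_zero_iff] at hρ
  obtain ⟨m, hm⟩ := hρ
  have hshift (x : ℝ) : ((translate (Multiplicative.ofAdd (-m : ℝ)) * F : CircleDeg1Liftˣ) :
      CircleDeg1Lift) x = (F : CircleDeg1Lift) x + (-m : ℤ) := by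
    simp [add_comm]
  refine ⟨translate (Multiplicative.ofAdd (-m : ℝ)) * F, fun x => ?_, ?_⟩
  · rw [hshift, coe_add_intCast, hF]
  · rw [translationNumber_eq_add_int hshift, ← hm]
    simp

theorem CircleDeg1Lift.exists_fixedPoint_le_lt_add_one {F : CircleDeg1Lift} (hF : Continuous F)
    (hτ : F.translationNumber = 0) (a : ℝ) : ∃ p, F p = p ∧ p ≤ a ∧ a < p + 1 := by
  obtain ⟨q, hq⟩ := F.exists_eq_add_translationNumber hF
  rw [hτ, add_zero] at hq
  refine ⟨q + ⌊a - q⌋, by rw [map_add_int, hq], ?_, ?_⟩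
  · linarith [Int.floor_le (a - q)]
  · linarith [Int.lt_floor_add_one (a - q)]

theorem CircleDeg1Lift.mapsTo_Ioo_of_apply_eq (F : CircleDeg1Liftˣ) {p : ℝ}
    (hp : (F : CircleDeg1Lift) p = p) :
    MapsTo (F : CircleDeg1Lift) (Ioo p (p + 1)) (Ioo p (p + 1)) := fun x hx => by
  have hmono := (toOrderIso F).strictMono
  refine ⟨?_, ?_⟩
  · simpa [hp] using hmono hx.1
  · simpa [map_add_one, hp] using hmono hx.2

theorem exists_iterate_mem_of_recurrent {F : CircleDeg1Lift} (hF : IsLiftOf F f) {p : ℝ}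
    (hmaps : MapsTo F (Ioo p (p + 1)) (Ioo p (p + 1))) {I : Set ℝ} (hI : IsOpen I)
    (hIp : I ⊆ Ioo p (p + 1)) {a : ℝ} (ha : a ∈ I)
    (hrec : ∀ s ∈ 𝓝 (a : S1), ∃ᶠ n in atTop, f^[n] a ∈ s) : ∃ n ≥ 1, F^[n] a ∈ I := by
  have hs : ((↑) '' I : Set S1) ∈ 𝓝 (a : S1) :=
    (QuotientAddGroup.isOpenMap_coe I hI).mem_nhds (mem_image_of_mem _ ha)
  obtain ⟨n, ⟨z, hz, hzn⟩, hn⟩ := ((hrec _ hs).and_eventually (eventually_ge_atTop 1)).exists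
  rw [hF.iterate] at hzn
  have hFn := hmaps.iterate n (hIp ha)
  have hmem {y : ℝ} (hy : y ∈ Ioo p (p + 1)) : y ∈ Ico p (p + 1) := Ioo_subset_Ico_self hy
  rw [AddCircle.coe_eq_coe_iff_of_mem_Ico (hmem (hIp hz)) (hmem hFn)] at hzn
  exact ⟨n, hn, hzn ▸ hz⟩

theorem apply_eq_self_of_recurrent {F : CircleDeg1Liftˣ} (hF : IsLiftOf F f)
    (hτ : (F : CircleDeg1Lift).translationNumber = 0) {x : S1}
    (hrec : ∀ s ∈ 𝓝 x, ∃ᶠ n in atTop, f^[n] x ∈ s) : f x = x := by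
  induction x using QuotientAddGroup.induction_on with | H a => ?_
  obtain ⟨p, hp, hpa, hap⟩ := exists_fixedPoint_le_lt_add_one (continuous_units F) hτ a
  rcases hpa.eq_or_lt with rfl | hpa
  · rw [hF, hp]
  have hmaps := mapsTo_Ioo_of_apply_eq F hp
  have hFa := hmaps ⟨hpa, hap⟩
  rw [hF]
  by_contra hne
  rcases (ne_of_apply_ne _ hne).lt_or_gt with hlt | hgt
  · obtain ⟨n, hn, hFn⟩ := exists_iterate_mem_of_recurrent hF hmaps isOpen_Ioo
      (Ioo_subset_Ioo_left hFa.1.le) ⟨hlt, hap⟩ hrec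
    have := (F : CircleDeg1Lift).monotone.antitone_iterate_of_map_le hlt.le hn
    simp only [Function.iterate_one] at this
    exact this.not_gt hFn.1
  · obtain ⟨n, hn, hFn⟩ := exists_iterate_mem_of_recurrent hF hmaps isOpen_Ioo
      (Ioo_subset_Ioo_right hFa.2.le) ⟨hpa, hgt⟩ hrec
    have := (F : CircleDeg1Lift).monotone.monotone_iterate_of_le_map hgt.le hn
    simp only [Function.iterate_one] at this
    exact this.not_gt hFn.2

theorem ae_apply_eq_self {μ : Measure S1} [IsFiniteMeasure μ] (hμ : MeasurePreserving f μ μ)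
    (hf : OrientationPreserving f) (hρ : rotationNumber f = 0) : ∀ᵐ x ∂μ, f x = x := by
  obtain ⟨F, hF, hτ⟩ := exists_isLiftOf_translationNumber_eq_zero hf hρ
  filter_upwards [hμ.conservative.ae_frequently_mem_of_mem_nhds] with x hx
  exact apply_eq_self_of_recurrent hF hτ hx

theorem apply_eq_self_of_mem_support {μ : Measure S1} [IsFiniteMeasure μ]
    (hμ : MeasurePreserving f μ μ) (hf : OrientationPreserving f) (hρ : rotationNumber f = 0)
    {x : S1} (hx : x ∈ μ.support) : f x = x :=
  Measure.support_subset_of_isClosed (isClosed_eq f.continuous continuous_id)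
    (ae_apply_eq_self hμ hf hρ) hx

end FixedPoints

theorem Set.Finite.image_of_eq_imp_eq {α β γ : Type*} {s : Set α} {f : α → β} {g : α → γ}
    (hfg : ∀ a ∈ s, ∀ b ∈ s, f a = f b → g a = g b) (hf : (f '' s).Finite) :
    (g '' s).Finite := by
  have hfiber (y : β) : (g '' (s ∩ f ⁻¹' {y})).Subsingleton := by
    rintro _ ⟨a, ⟨ha, rfl⟩, rfl⟩ _ ⟨b, ⟨hb, hab⟩, rfl⟩
    exact hfg a ha b hb hab.symm
  refine (hf.biUnion fun y _ => (hfiber y).finite).subset ?_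
  rintro _ ⟨a, ha, rfl⟩
  exact mem_biUnion (mem_image_of_mem f ha) ⟨a, ⟨ha, rfl⟩, rfl⟩

section InvariantSubgroup

variable {Γ : Subgroup (S1 ≃ₜ S1)} {μ : Measure S1} [IsProbabilityMeasure μ]

theorem rotationNumber_inv_mul (hΓ : ∀ f ∈ Γ, OrientationPreserving f)
    (hμ : ∀ γ ∈ Γ, MeasurePreserving γ μ μ) {γ δ : S1 ≃ₜ S1} (hγ : γ ∈ Γ) (hδ : δ ∈ Γ) :
    rotationNumber (δ⁻¹ * γ) = rotationNumber γ - rotationNumber δ := by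
  have hδγ := mul_mem (inv_mem hδ) hγ
  have h := rotationNumber_mul_of_measurePreserving (hμ δ hδ) (hμ _ hδγ) (hΓ δ hδ) (hΓ _ hδγ)
  rw [mul_inv_cancel_left] at h
  exact eq_sub_of_add_eq' h.symm

theorem rotationNumber_eq_of_apply_eq (hΓ : ∀ f ∈ Γ, OrientationPreserving f)
    (hμ : ∀ γ ∈ Γ, MeasurePreserving γ μ μ) {γ δ : S1 ≃ₜ S1} (hγ : γ ∈ Γ) (hδ : δ ∈ Γ)
    {x : S1} (h : γ x = δ x) : rotationNumber γ = rotationNumber δ := by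
  have hfix : (δ⁻¹ * γ) x = x := δ.symm_apply_eq.2 h
  have := rotationNumber_eq_zero_of_apply_eq (hΓ _ (mul_mem (inv_mem hδ) hγ)) hfix
  rwa [rotationNumber_inv_mul hΓ hμ hγ hδ, sub_eq_zero] at this

theorem apply_eq_of_rotationNumber_eq (hΓ : ∀ f ∈ Γ, OrientationPreserving f)
    (hμ : ∀ γ ∈ Γ, MeasurePreserving γ μ μ) {γ δ : S1 ≃ₜ S1} (hγ : γ ∈ Γ) (hδ : δ ∈ Γ)
    {x : S1} (hx : x ∈ μ.support) (h : rotationNumber γ = rotationNumber δ) : γ x = δ x := by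
  have hδγ := mul_mem (inv_mem hδ) hγ
  have hρ : rotationNumber (δ⁻¹ * γ) = 0 := by
    rw [rotationNumber_inv_mul hΓ hμ hγ hδ, h, sub_self]
  exact δ.symm_apply_eq.1 (apply_eq_self_of_mem_support (hμ _ hδγ) (hΓ _ hδγ) hρ hx)

end InvariantSubgroup

/-- A subgroup of `Homeo₊(S¹)` preserving a Borel probability measure on the
circle has a finite image under the rotation number function iff it has a finite orbit. -/
theorem finite_rotation_image_iff_finite_orbit_of_invariant_measure
    (Γ : Subgroup (S1 ≃ₜ S1)) (hΓ : ∀ f ∈ Γ, OrientationPreserving f)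
    (hmeas : HasInvariantProbMeasure Γ) :
    (rotationNumber '' (Γ : Set (S1 ≃ₜ S1))).Finite ↔ HasFiniteOrbit Γ := by
  obtain ⟨μ, hμ, hinv⟩ := hmeas
  have hpres : ∀ γ ∈ Γ, MeasurePreserving γ μ μ := fun γ hγ =>
    ⟨γ.continuous.measurable, hinv γ hγ⟩
  obtain ⟨x₀, hx₀⟩ := μ.nonempty_support (IsProbabilityMeasure.ne_zero μ)
  constructor
  · intro hfin
    refine ⟨x₀, show ((fun γ : S1 ≃ₜ S1 => γ x₀) '' Γ).Finite from ?_⟩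
    exact hfin.image_of_eq_imp_eq fun γ hγ δ hδ =>
      apply_eq_of_rotationNumber_eq hΓ hpres hγ hδ hx₀
  · rintro ⟨x, hx : ((fun γ : S1 ≃ₜ S1 => γ x) '' Γ).Finite⟩
    exact hx.image_of_eq_imp_eq fun γ hγ δ hδ => rotationNumber_eq_of_apply_eq hΓ hpres hγ hδ
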